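/- In Setting (B) with homoskedastic errors σ²_{i,j} = σ² > 0 for all i, j, suppose the deterministic weights v_j, w_j (j = 2,...,J−1) are nonnegative with Σ_j v_j = Σ_j w_j = 1 and σ²·w_j < (τ² + σ²)·v_j for every j. Then Cov(β̂^NPWP, β̂^CO) < Var(β̂^NPWP). -/

import Mathlib

open MeasureTheory ProbabilityTheory Finset

section MyHelpers

lemma my_l2_integrable_mul {Ω : Type*} [MeasureSpace Ω] {f g : Ω → ℝ}
    (hf : MemLp f 2 ℙ) (hg : MemLp g 2 ℙ) : Integrable (fun ω => f ω * g ω) ℙ := by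
  have h : MemLp (f • g) 1 ℙ := hg.smul hf
  exact memLp_one_iff_integrable.mp h

lemma my_key_integral {Ω : Type*} [MeasureSpace Ω] [IsProbabilityMeasure (ℙ : Measure Ω)]
    {κ : Type*} (D : Finset κ) (G : κ → Ω → ℝ)
    (hL2 : ∀ x ∈ D, MemLp (G x) 2 ℙ)
    (hind : ∀ x ∈ D, ∀ y ∈ D, x ≠ y → IndepFun (G x) (G y) ℙ)
    (hmean : ∀ x ∈ D, ∫ ω, G x ω = 0)
    (r s : κ → ℝ) :
    ∫ ω, (∑ x ∈ D, r x * G x ω) * (∑ y ∈ D, s y * G y ω)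
      = ∑ x ∈ D, r x * s x * ∫ ω, (G x ω)^2 := by
  have hInt : ∀ x ∈ D, ∀ y ∈ D,
      Integrable (fun ω => (r x * G x ω) * (s y * G y ω)) ℙ := by
    intro x hx y hy
    have := (my_l2_integrable_mul (hL2 x hx) (hL2 y hy)).const_mul (r x * s y)
    apply this.congr
    filter_upwards with ω; ring
  calc ∫ ω, (∑ x ∈ D, r x * G x ω) * (∑ y ∈ D, s y * G y ω)
      = ∫ ω, ∑ x ∈ D, ∑ y ∈ D, (r x * G x ω) * (s y * G y ω) := by
        congr 1; ext ω; rw [Finset.sum_mul_sum]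
    _ = ∑ x ∈ D, ∑ y ∈ D, ∫ ω, (r x * G x ω) * (s y * G y ω) := by
        rw [integral_finset_sum]
        · exact Finset.sum_congr rfl fun x hx => integral_finset_sum D (fun y hy => hInt x hx y hy)
        · intro x hx
          exact integrable_finset_sum D (fun y hy => hInt x hx y hy)
    _ = ∑ x ∈ D, r x * s x * ∫ ω, (G x ω)^2 := by
        refine Finset.sum_congr rfl fun x hx => ?_
        rw [Finset.sum_eq_single_of_mem x hx]
        · have h1 : ∀ ω, (r x * G x ω) * (s x * G x ω) = (r x * s x) * (G x ω)^2 := by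
            intro ω; ring
          simp_rw [h1]
          rw [integral_const_mul]
        · intro y hy hyx
          have hxy : ∫ ω, G x ω * G y ω = (∫ ω, G x ω) * ∫ ω, G y ω :=
            (hind x hx y hy (Ne.symm hyx)).integral_mul_eq_mul_integral
              (hL2 x hx).aestronglyMeasurable (hL2 y hy).aestronglyMeasurable
          have h2 : ∀ ω, (r x * G x ω) * (s y * G y ω) = (r x * s y) * (G x ω * G y ω) := by
            intro ω; ring
          simp_rw [h2]
          rw [integral_const_mul, hxy, hmean x hx]
          ring

noncomputable def ccf (J j i : ℕ) : ℝ :=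
  if i < j then ((j:ℝ)-1)⁻¹ else -(((J:ℝ)-(j:ℝ))⁻¹)

noncomputable def eef (J j i : ℕ) : ℝ :=
  if i = j - 1 then 1 else if j ≤ i then -(((J:ℝ)-(j:ℝ))⁻¹) else 0

lemma Icc_split' (f : ℕ → ℝ) {a b c : ℕ} (hab : a ≤ b + 1) (hbc : b ≤ c) :
    ∑ i ∈ Icc a c, f i = ∑ i ∈ Icc a b, f i + ∑ i ∈ Icc (b+1) c, f i := by
  rw [← Finset.sum_union]
  · congr 1
    ext x
    simp only [Finset.mem_union, Finset.mem_Icc]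
    omega
  · rw [Finset.disjoint_left]
    intro x hx hx'
    simp only [Finset.mem_Icc] at hx hx'
    omega

section Casts
variable {J j k : ℕ}

lemma cast_facts (hJ : 3 ≤ J) (hj : 2 ≤ j) (hjk : j ≤ k) (hk : k ≤ J - 1) :
    (0:ℝ) < (j:ℝ) - 1 ∧ (0:ℝ) < (k:ℝ) - 1 ∧ (0:ℝ) < (J:ℝ) - j ∧ (0:ℝ) < (J:ℝ) - k := by
  have h1 : (2:ℝ) ≤ (j:ℝ) := by exact_mod_cast hj
  have h2 : (2:ℝ) ≤ (k:ℝ) := by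
    have : 2 ≤ k := le_trans hj hjk
    exact_mod_cast this
  have h3 : (k:ℝ) + 1 ≤ (J:ℝ) := by
    have : k + 1 ≤ J := by omega
    exact_mod_cast this
  have h4 : (j:ℝ) ≤ (k:ℝ) := by exact_mod_cast hjk
  refine ⟨by linarith, by linarith, by linarith, by linarith⟩

lemma cast_sub_eq {a b : ℕ} (h : b ≤ a) : ((a - b : ℕ) : ℝ) = (a:ℝ) - (b:ℝ) := by
  push_cast [h]; ring

lemma sum_cc_cc (hJ : 3 ≤ J) (hj : 2 ≤ j) (hjk : j ≤ k) (hk : k ≤ J - 1) :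
    ∑ i ∈ Icc 1 (J-1), ccf J j i * ccf J k i
      = ((J:ℝ)-1) * (((J:ℝ)-(j:ℝ))⁻¹ * ((k:ℝ)-1)⁻¹) := by
  obtain ⟨c1, c2, c3, c4⟩ := cast_facts hJ hj hjk hk
  have hs1 := Icc_split' (fun i => ccf J j i * ccf J k i) (a := 1) (b := j-1) (c := J-1)
    (by omega) (by omega)
  rw [show (j-1)+1 = j by omega] at hs1
  have hs2 := Icc_split' (fun i => ccf J j i * ccf J k i) (a := j) (b := k-1) (c := J-1)
    (by omega) (by omega)
  rw [show (k-1)+1 = k by omega] at hs2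
  rw [hs1, hs2]
  have e1 : ∑ i ∈ Icc 1 (j-1), ccf J j i * ccf J k i
      = ((j-1 : ℕ) : ℝ) * (((j:ℝ)-1)⁻¹ * ((k:ℝ)-1)⁻¹) := by
    rw [Finset.sum_congr rfl (g := fun _ => ((j:ℝ)-1)⁻¹ * ((k:ℝ)-1)⁻¹)
      (fun i hi => by
        rw [mem_Icc] at hi
        simp [ccf, show i < j by omega, show i < k by omega])]
    rw [Finset.sum_const, Nat.card_Icc, show j-1+1-1 = j-1 from by omega, nsmul_eq_mul]
  have e2 : ∑ i ∈ Icc j (k-1), ccf J j i * ccf J k i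
      = ((k-j : ℕ) : ℝ) * (-(((J:ℝ)-(j:ℝ))⁻¹) * ((k:ℝ)-1)⁻¹) := by
    rw [Finset.sum_congr rfl (g := fun _ => -(((J:ℝ)-(j:ℝ))⁻¹) * ((k:ℝ)-1)⁻¹)
      (fun i hi => by
        rw [mem_Icc] at hi
        simp [ccf, show ¬ i < j by omega, show i < k by omega])]
    rw [Finset.sum_const, Nat.card_Icc, show k-1+1-j = k-j from by omega, nsmul_eq_mul]
  have e3 : ∑ i ∈ Icc k (J-1), ccf J j i * ccf J k i
      = ((J-k : ℕ) : ℝ) * (((J:ℝ)-(j:ℝ))⁻¹ * ((J:ℝ)-(k:ℝ))⁻¹) := by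
    rw [Finset.sum_congr rfl (g := fun _ => ((J:ℝ)-(j:ℝ))⁻¹ * ((J:ℝ)-(k:ℝ))⁻¹)
      (fun i hi => by
        rw [mem_Icc] at hi
        simp [ccf, show ¬ i < j by omega, show ¬ i < k by omega])]
    rw [Finset.sum_const, Nat.card_Icc, show J-1+1-k = J-k from by omega, nsmul_eq_mul]
  rw [e1, e2, e3, cast_sub_eq (by omega : 1 ≤ j), cast_sub_eq hjk,
    cast_sub_eq (by omega : k ≤ J)]
  have c5 : ((j:ℝ)-1) ≠ 0 := ne_of_gt c1
  have c6 : ((k:ℝ)-1) ≠ 0 := ne_of_gt c2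
  have c7 : ((J:ℝ)-(j:ℝ)) ≠ 0 := ne_of_gt c3
  have c8 : ((J:ℝ)-(k:ℝ)) ≠ 0 := ne_of_gt c4
  field_simp
  ring

lemma sum_cc_sq (hJ : 3 ≤ J) (hj : 2 ≤ j) (hk : j ≤ J - 1) :
    ∑ i ∈ Icc 1 (J-1), ccf J j i * ccf J j i
      = ((j:ℝ)-1)⁻¹ + ((J:ℝ)-(j:ℝ))⁻¹ := by
  rw [sum_cc_cc hJ hj le_rfl hk]
  obtain ⟨c1, c2, c3, c4⟩ := cast_facts hJ hj le_rfl hk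
  have c5 : ((j:ℝ)-1) ≠ 0 := ne_of_gt c1
  have c7 : ((J:ℝ)-(j:ℝ)) ≠ 0 := ne_of_gt c3
  have key : (J:ℝ) - 1 = ((J:ℝ)-(j:ℝ)) + ((j:ℝ)-1) := by ring
  rw [key, add_mul]
  rw [show ((J:ℝ)-(j:ℝ)) * (((J:ℝ)-(j:ℝ))⁻¹ * ((j:ℝ)-1)⁻¹)
      = (((J:ℝ)-(j:ℝ)) * ((J:ℝ)-(j:ℝ))⁻¹) * ((j:ℝ)-1)⁻¹ from by ring,
    mul_inv_cancel₀ c7, one_mul]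
  rw [show ((j:ℝ)-1) * (((J:ℝ)-(j:ℝ))⁻¹ * ((j:ℝ)-1)⁻¹)
      = (((j:ℝ)-1) * ((j:ℝ)-1)⁻¹) * ((J:ℝ)-(j:ℝ))⁻¹ from by ring,
    mul_inv_cancel₀ c5, one_mul]

lemma sum_cc_ee (hJ : 3 ≤ J) (hj : 2 ≤ j) (hk : j ≤ J - 1) :
    ∑ i ∈ Icc 1 (J-1), ccf J j i * eef J j i
      = ((j:ℝ)-1)⁻¹ + ((J:ℝ)-(j:ℝ))⁻¹ := by
  obtain ⟨c1, c2, c3, c4⟩ := cast_facts hJ hj le_rfl hk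
  have hs1 := Icc_split' (fun i => ccf J j i * eef J j i) (a := 1) (b := j-2) (c := J-1)
    (by omega) (by omega)
  rw [show (j-2)+1 = j-1 by omega] at hs1
  have hs2 := Icc_split' (fun i => ccf J j i * eef J j i) (a := j-1) (b := j-1) (c := J-1)
    (by omega) (by omega)
  rw [show (j-1)+1 = j by omega] at hs2
  rw [hs1, hs2]
  have e1 : ∑ i ∈ Icc 1 (j-2), ccf J j i * eef J j i = 0 := by
    apply Finset.sum_eq_zero
    intro i hi
    rw [mem_Icc] at hi
    simp [eef, show ¬ i = j - 1 by omega, show ¬ j ≤ i by omega]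
  have e2 : ∑ i ∈ Icc (j-1) (j-1), ccf J j i * eef J j i = ((j:ℝ)-1)⁻¹ := by
    rw [Finset.Icc_self, Finset.sum_singleton]
    rw [show ccf J j (j-1) = ((j:ℝ)-1)⁻¹ from by simp [ccf, show j - 1 < j by omega],
      show eef J j (j-1) = 1 from by simp [eef]]
    ring
  have e3 : ∑ i ∈ Icc j (J-1), ccf J j i * eef J j i
      = ((J-j : ℕ) : ℝ) * (((J:ℝ)-(j:ℝ))⁻¹ * ((J:ℝ)-(j:ℝ))⁻¹) := by
    rw [Finset.sum_congr rfl (g := fun _ => ((J:ℝ)-(j:ℝ))⁻¹ * ((J:ℝ)-(j:ℝ))⁻¹)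
      (fun i hi => by
        rw [mem_Icc] at hi
        simp [ccf, eef, show ¬ i < j by omega, show ¬ i = j - 1 by omega,
          show j ≤ i by omega])]
    rw [Finset.sum_const, Nat.card_Icc, show J-1+1-j = J-j from by omega, nsmul_eq_mul]
  rw [e1, e2, e3, cast_sub_eq (by omega : j ≤ J)]
  have c7 : ((J:ℝ)-(j:ℝ)) ≠ 0 := ne_of_gt c3
  rw [show ((J:ℝ)-(j:ℝ)) * (((J:ℝ)-(j:ℝ))⁻¹ * ((J:ℝ)-(j:ℝ))⁻¹)
      = (((J:ℝ)-(j:ℝ)) * ((J:ℝ)-(j:ℝ))⁻¹) * ((J:ℝ)-(j:ℝ))⁻¹ from by ring,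
    mul_inv_cancel₀ c7, one_mul]
  ring

lemma sum_cc_ee' (hJ : 3 ≤ J) (hj : 2 ≤ j) (hk : j + 1 ≤ J - 1) :
    ∑ i ∈ Icc 1 (J-1), ccf J j i * eef J (j+1) i = 0 := by
  obtain ⟨c1, c2, c3, c4⟩ := cast_facts hJ hj (le_of_lt (Nat.lt_succ_self j)) (by omega)
  have hs1 := Icc_split' (fun i => ccf J j i * eef J (j+1) i) (a := 1) (b := j-1) (c := J-1)
    (by omega) (by omega)
  rw [show (j-1)+1 = j by omega] at hs1
  have hs2 := Icc_split' (fun i => ccf J j i * eef J (j+1) i) (a := j) (b := j) (c := J-1)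
    (by omega) (by omega)
  rw [hs1, hs2]
  have c8 : ((J:ℝ)-((j:ℝ)+1)) ≠ 0 := by
    have h3 : (j:ℝ) + 2 ≤ (J:ℝ) := by exact_mod_cast (by omega : j + 2 ≤ J)
    intro h; linarith
  have heq : ∀ i, j + 1 ≤ i → eef J (j+1) i = -(((J:ℝ)-((j:ℝ)+1))⁻¹) := by
    intro i hi
    rw [eef, if_neg (by omega), if_pos hi]
    push_cast
    ring_nf
  have e1 : ∑ i ∈ Icc 1 (j-1), ccf J j i * eef J (j+1) i = 0 := by
    apply Finset.sum_eq_zero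
    intro i hi
    rw [mem_Icc] at hi
    rw [eef, if_neg (by omega), if_neg (by omega)]
    ring
  have e2 : ∑ i ∈ Icc j j, ccf J j i * eef J (j+1) i = -(((J:ℝ)-(j:ℝ))⁻¹) := by
    rw [Finset.Icc_self, Finset.sum_singleton]
    rw [show ccf J j j = -(((J:ℝ)-(j:ℝ))⁻¹) from by simp [ccf],
      show eef J (j+1) j = 1 from by rw [eef, if_pos (by omega)]]
    ring
  have e3 : ∑ i ∈ Icc (j+1) (J-1), ccf J j i * eef J (j+1) i
      = ((J-1-j : ℕ) : ℝ) * (((J:ℝ)-(j:ℝ))⁻¹ * (((J:ℝ)-((j:ℝ)+1))⁻¹)) := by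
    rw [Finset.sum_congr rfl (g := fun _ => ((J:ℝ)-(j:ℝ))⁻¹ * (((J:ℝ)-((j:ℝ)+1))⁻¹))
      (fun i hi => by
        rw [mem_Icc] at hi
        rw [show ccf J j i = -(((J:ℝ)-(j:ℝ))⁻¹) from by simp [ccf, show ¬ i < j by omega],
          heq i (by omega)]
        ring)]
    rw [Finset.sum_const, Nat.card_Icc, show J-1+1-(j+1) = J-1-j from by omega, nsmul_eq_mul]
  rw [e1, e2, e3]
  have r3 : ((J-1-j : ℕ) : ℝ) = (J:ℝ) - ((j:ℝ)+1) := by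
    rw [show J-1-j = J-(j+1) from by omega, cast_sub_eq (by omega : j+1 ≤ J)]
    push_cast
    ring
  rw [r3]
  have c7 : ((J:ℝ)-(j:ℝ)) ≠ 0 := ne_of_gt c3
  rw [show ((J:ℝ)-((j:ℝ)+1)) * (((J:ℝ)-(j:ℝ))⁻¹ * (((J:ℝ)-((j:ℝ)+1))⁻¹))
      = (((J:ℝ)-((j:ℝ)+1)) * ((J:ℝ)-((j:ℝ)+1))⁻¹) * ((J:ℝ)-(j:ℝ))⁻¹ from by ring,
    mul_inv_cancel₀ c8, one_mul]
  ring
end Casts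

end MyHelpers

/-- The covariance of two real random variables (with respect to the ambient
probability measure of a `MeasureSpace`). -/
noncomputable def covar {Ω : Type*} [MeasureSpace Ω] (f g : Ω → ℝ) : ℝ :=
  ∫ ω, (f ω - ∫ x, f x) * (g ω - ∫ x, g x)
set_option maxHeartbeats 2000000 in
/-- **Covariance bound: `Cov(β̂^NPWP, β̂^CO) < Var(β̂^NPWP)`** under homoskedastic errors,
nonnegative weights summing to one, and `σ² w_j < (τ² + σ²) v_j` for every `j`. -/
theorem stmt_18
    {Ω : Type*} [MeasureSpace Ω] [IsProbabilityMeasure (ℙ : Measure Ω)]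
    (J : ℕ) (hJ : 3 ≤ J)
    (μc β τsq : ℝ) (θ : ℕ → ℝ) (σsq : ℕ → ℕ → ℝ)
    (α : ℕ → Ω → ℝ) (ε : ℕ → ℕ → Ω → ℝ)
    (hmα : ∀ i, Measurable (α i)) (hmε : ∀ i j, Measurable (ε i j))
    -- the random variables {α_i} ∪ {ε_{i,j}} are mutually independent
    (hindep : iIndepFun
      (fun x : {x : ℕ ⊕ ℕ × ℕ // (∀ i, x = Sum.inl i → i ∈ Icc 1 (J - 1)) ∧
          (∀ i j, x = Sum.inr (i, j) → i ∈ Icc 1 (J - 1) ∧ j ∈ Icc 1 J)} =>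
        Sum.elim α (fun q => ε q.1 q.2) x.1) ℙ)
    -- moment assumptions
    (hEα : ∀ i ∈ Icc 1 (J - 1), ∫ ω, α i ω ∂ℙ = 0)
    (hVα : ∀ i ∈ Icc 1 (J - 1), variance (α i) ℙ = τsq)
    (hL2α : ∀ i ∈ Icc 1 (J - 1), MemLp (α i) 2 ℙ)
    (hEε : ∀ i ∈ Icc 1 (J - 1), ∀ j ∈ Icc 1 J, ∫ ω, ε i j ω ∂ℙ = 0)
    (hVε : ∀ i ∈ Icc 1 (J - 1), ∀ j ∈ Icc 1 J, variance (ε i j) ℙ = σsq i j)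
    (hL2ε : ∀ i ∈ Icc 1 (J - 1), ∀ j ∈ Icc 1 J, MemLp (ε i j) 2 ℙ)
    -- the mixed effects model: cluster i is on intervention in periods j > i
    (Y : ℕ → ℕ → Ω → ℝ)
    (hY : ∀ i j ω, Y i j ω = μc + α i ω + θ j + (if i < j then β else 0) + ε i j ω)
    -- the within-period contrast A_j
    (A : ℕ → Ω → ℝ)
    (hA : ∀ j ω, A j ω = ((j : ℝ) - 1)⁻¹ * ∑ i ∈ Icc 1 (j - 1), Y i j ω
        - ((J : ℝ) - (j : ℝ))⁻¹ * ∑ i ∈ Icc j (J - 1), Y i j ω)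
    -- the crossover contrast B_j
    (B : ℕ → Ω → ℝ)
    (hB : ∀ j ω, B j ω = Y (j - 1) j ω - Y (j - 1) (j - 1) ω
        - ((J : ℝ) - (j : ℝ))⁻¹ * ∑ l ∈ Icc j (J - 1), (Y l j ω - Y l (j - 1) ω))
    -- the non-parametric within-period estimator with deterministic weights v
    (v : ℕ → ℝ) (βNPWP : Ω → ℝ)
    (hNPWP : ∀ ω, βNPWP ω = ∑ j ∈ Icc 2 (J - 1), v j * A j ω)
    -- the crossover estimator with deterministic weights w
    (w : ℕ → ℝ) (βCO : Ω → ℝ)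
    (hCO : ∀ ω, βCO ω = ∑ j ∈ Icc 2 (J - 1), w j * B j ω)
    -- homoskedastic errors
    (σ2 : ℝ) (hσ : ∀ i ∈ Icc 1 (J - 1), ∀ j ∈ Icc 1 J, σsq i j = σ2)
    -- weight assumptions
    (hσ2pos : 0 < σ2)
    (hv0 : ∀ j ∈ Icc 2 (J - 1), 0 ≤ v j) (hw0 : ∀ j ∈ Icc 2 (J - 1), 0 ≤ w j)
    (hvsum : ∑ j ∈ Icc 2 (J - 1), v j = 1) (hwsum : ∑ j ∈ Icc 2 (J - 1), w j = 1)
    (hvw : ∀ j ∈ Icc 2 (J - 1), σ2 * w j < (τsq + σ2) * v j)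
    :
    covar βNPWP βCO < variance βNPWP ℙ := by
  classical
  have hKsub : Icc 2 (J-1) ⊆ Icc 1 J := Finset.Icc_subset_Icc (by omega) (by omega)
  set G : ℕ ⊕ ℕ × ℕ → Ω → ℝ := Sum.elim α (fun q => ε q.1 q.2) with hG
  set D : Finset (ℕ ⊕ ℕ × ℕ) :=
    ((Icc 1 (J-1)).map ⟨Sum.inl, Sum.inl_injective⟩) ∪
    (((Icc 1 (J-1)) ×ˢ (Icc 1 J)).map ⟨Sum.inr, Sum.inr_injective⟩) with hD
  set aα : ℕ → ℝ := fun i => ∑ j ∈ Icc 2 (J-1), v j * ccf J j i with haα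
  set aE : ℕ × ℕ → ℝ :=
    fun z => if z.2 ∈ Icc 2 (J-1) then v z.2 * ccf J z.2 z.1 else 0 with haE
  set bE : ℕ × ℕ → ℝ := fun z =>
    (if z.2 ∈ Icc 2 (J-1) then w z.2 * eef J z.2 z.1 else 0)
    - (if z.2 + 1 ∈ Icc 2 (J-1) then w (z.2+1) * eef J (z.2+1) z.1 else 0) with hbE
  have hDdisj : Disjoint ((Icc 1 (J-1)).map ⟨Sum.inl, Sum.inl_injective⟩)
      ((((Icc 1 (J-1)) ×ˢ (Icc 1 J)).map ⟨Sum.inr, Sum.inr_injective⟩)) := by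
    rw [Finset.disjoint_left]
    rintro x hx hx'
    simp only [Finset.mem_map, Function.Embedding.coeFn_mk] at hx hx'
    obtain ⟨i, _, rfl⟩ := hx
    obtain ⟨z, _, h⟩ := hx'
    exact nomatch h
  have hDmem : ∀ x ∈ D, (∀ i, x = Sum.inl i → i ∈ Icc 1 (J - 1)) ∧
      (∀ p q, x = Sum.inr (p, q) → p ∈ Icc 1 (J - 1) ∧ q ∈ Icc 1 J) := by
    intro x hx
    rw [hD, Finset.mem_union] at hx
    rcases hx with hx | hx <;>
      simp only [Finset.mem_map, Function.Embedding.coeFn_mk] at hx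
    · obtain ⟨i, hi, rfl⟩ := hx
      refine ⟨fun i' h => ?_, fun p q h => nomatch h⟩
      injection h with h'
      exact h' ▸ hi
    · obtain ⟨z, hz, rfl⟩ := hx
      refine ⟨fun i h => (nomatch h), fun p q h => ?_⟩
      injection h with h'
      subst h'
      rw [Finset.mem_product] at hz
      exact hz
  have hsumD : ∀ (p : ℕ → ℝ) (q : ℕ × ℕ → ℝ) (ω : Ω),
      ∑ x ∈ D, Sum.elim p q x * G x ω
        = (∑ i ∈ Icc 1 (J-1), p i * α i ω)
          + ∑ z ∈ (Icc 1 (J-1)) ×ˢ (Icc 1 J), q z * ε z.1 z.2 ω := by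
    intro p q ω
    rw [hD, Finset.sum_union hDdisj, Finset.sum_map, Finset.sum_map]
    simp only [Function.Embedding.coeFn_mk, hG, Sum.elim_inl, Sum.elim_inr]
  have hDsum2 : ∀ (F : (ℕ ⊕ ℕ × ℕ) → ℝ),
      ∑ x ∈ D, F x = ∑ i ∈ Icc 1 (J-1), F (Sum.inl i)
        + ∑ z ∈ (Icc 1 (J-1)) ×ˢ (Icc 1 J), F (Sum.inr z) := by
    intro F
    rw [hD, Finset.sum_union hDdisj, Finset.sum_map, Finset.sum_map]
    simp only [Function.Embedding.coeFn_mk]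
  -- moments of the family G
  have hL2G : ∀ x ∈ D, MemLp (G x) 2 ℙ := by
    intro x hx
    obtain ⟨h1, h2⟩ := hDmem x hx
    match x with
    | Sum.inl i => exact hL2α i (h1 i rfl)
    | Sum.inr (p, q) => exact hL2ε p (h2 p q rfl).1 q (h2 p q rfl).2
  have hmeanG : ∀ x ∈ D, ∫ ω, G x ω = 0 := by
    intro x hx
    obtain ⟨h1, h2⟩ := hDmem x hx
    match x with
    | Sum.inl i => exact hEα i (h1 i rfl)
    | Sum.inr (p, q) => exact hEε p (h2 p q rfl).1 q (h2 p q rfl).2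
  have hindepG : ∀ x ∈ D, ∀ y ∈ D, x ≠ y → IndepFun (G x) (G y) ℙ := by
    intro x hx y hy hxy
    exact hindep.indepFun (i := ⟨x, hDmem x hx⟩) (j := ⟨y, hDmem y hy⟩)
      (fun h => hxy (congrArg Subtype.val h))
  have hvarG : ∀ x ∈ D, ∫ ω, (G x ω)^2 = Sum.elim (fun _ => τsq) (fun _ => σ2) x := by
    intro x hx
    obtain ⟨h1, h2⟩ := hDmem x hx
    have hv : ∫ ω, (G x ω)^2 = variance (G x) ℙ := by
      rw [variance_eq_sub (hL2G x hx), hmeanG x hx]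
      simp [Pi.pow_apply]
    rw [hv]
    match x with
    | Sum.inl i => exact hVα i (h1 i rfl)
    | Sum.inr (p, q) =>
        rw [show variance (G (Sum.inr (p,q))) ℙ = variance (ε p q) ℙ from rfl,
          hVε p (h2 p q rfl).1 q (h2 p q rfl).2, hσ p (h2 p q rfl).1 q (h2 p q rfl).2]
        rfl
  -- pointwise representation of A and B
  have hArep : ∀ j ∈ Icc 2 (J-1), ∀ ω, A j ω
      = (((j:ℝ)-1)⁻¹ * ∑ i ∈ Icc 1 (j-1), (μc + θ j + (if i < j then β else 0))
        - ((J:ℝ)-(j:ℝ))⁻¹ * ∑ i ∈ Icc j (J-1), (μc + θ j + (if i < j then β else 0)))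
        + ∑ i ∈ Icc 1 (J-1), ccf J j i * (α i ω + ε i j ω) := by
    intro j hj ω
    rw [mem_Icc] at hj
    have hsplit : ∑ i ∈ Icc 1 (J-1), ccf J j i * (α i ω + ε i j ω)
        = ∑ i ∈ Icc 1 (j-1), ccf J j i * (α i ω + ε i j ω)
          + ∑ i ∈ Icc j (J-1), ccf J j i * (α i ω + ε i j ω) := by
      have h := Icc_split' (fun i => ccf J j i * (α i ω + ε i j ω))
        (a := 1) (b := j-1) (c := J-1) (by omega) (by omega)
      rw [show (j-1)+1 = j by omega] at h
      exact h
    have g1 : ∑ i ∈ Icc 1 (j-1), ccf J j i * (α i ω + ε i j ω)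
        = ((j:ℝ)-1)⁻¹ * ∑ i ∈ Icc 1 (j-1), (α i ω + ε i j ω) := by
      rw [Finset.mul_sum]
      refine Finset.sum_congr rfl fun i hi => ?_
      rw [mem_Icc] at hi
      simp [ccf, show i < j by omega]
    have g2 : ∑ i ∈ Icc j (J-1), ccf J j i * (α i ω + ε i j ω)
        = -(((J:ℝ)-(j:ℝ))⁻¹) * ∑ i ∈ Icc j (J-1), (α i ω + ε i j ω) := by
      rw [Finset.mul_sum]
      refine Finset.sum_congr rfl fun i hi => ?_
      rw [mem_Icc] at hi
      simp [ccf, show ¬ i < j by omega]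
    have e3 : ∀ s : Finset ℕ, ∑ i ∈ s, Y i j ω
        = ∑ i ∈ s, (μc + θ j + (if i < j then β else 0)) + ∑ i ∈ s, (α i ω + ε i j ω) := by
      intro s
      rw [← Finset.sum_add_distrib]
      exact Finset.sum_congr rfl fun i _ => by rw [hY]; ring
    rw [hA, hsplit, g1, g2, e3 (Icc 1 (j-1)), e3 (Icc j (J-1))]
    ring
  have hBrep : ∀ j ∈ Icc 2 (J-1), ∀ ω, B j ω
      = ((θ j - θ (j-1) + β) - ((J:ℝ)-(j:ℝ))⁻¹ * ∑ l ∈ Icc j (J-1), (θ j - θ (j-1)))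
        + ∑ i ∈ Icc 1 (J-1), eef J j i * (ε i j ω - ε i (j-1) ω) := by
    intro j hj ω
    rw [mem_Icc] at hj
    have hsplit1 : ∑ i ∈ Icc 1 (J-1), eef J j i * (ε i j ω - ε i (j-1) ω)
        = ∑ i ∈ Icc 1 (j-2), eef J j i * (ε i j ω - ε i (j-1) ω)
          + ∑ i ∈ Icc (j-1) (j-1), eef J j i * (ε i j ω - ε i (j-1) ω)
          + ∑ i ∈ Icc j (J-1), eef J j i * (ε i j ω - ε i (j-1) ω) := by
      have h1 := Icc_split' (fun i => eef J j i * (ε i j ω - ε i (j-1) ω))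
        (a := 1) (b := j-2) (c := J-1) (by omega) (by omega)
      rw [show (j-2)+1 = j-1 by omega] at h1
      have h2 := Icc_split' (fun i => eef J j i * (ε i j ω - ε i (j-1) ω))
        (a := j-1) (b := j-1) (c := J-1) (by omega) (by omega)
      rw [show (j-1)+1 = j by omega] at h2
      rw [h1, h2]
      ring
    rw [hB, hsplit1]
    have e1 : ∑ i ∈ Icc 1 (j-2), eef J j i * (ε i j ω - ε i (j-1) ω) = 0 :=
      Finset.sum_eq_zero fun i hi => by
        rw [mem_Icc] at hi
        rw [eef, if_neg (by omega), if_neg (by omega)]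
        ring
    have e2 : ∑ i ∈ Icc (j-1) (j-1), eef J j i * (ε i j ω - ε i (j-1) ω)
        = ε (j-1) j ω - ε (j-1) (j-1) ω := by
      rw [Finset.Icc_self, Finset.sum_singleton, eef, if_pos rfl]
      ring
    have e3 : ∑ i ∈ Icc j (J-1), eef J j i * (ε i j ω - ε i (j-1) ω)
        = -(((J:ℝ)-(j:ℝ))⁻¹) * ∑ i ∈ Icc j (J-1), (ε i j ω - ε i (j-1) ω) := by
      rw [Finset.mul_sum]
      exact Finset.sum_congr rfl fun i hi => by
        rw [mem_Icc] at hi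
        rw [eef, if_neg (by omega), if_pos (by omega)]
    have e4 : ∑ l ∈ Icc j (J-1), (Y l j ω - Y l (j-1) ω)
        = ∑ l ∈ Icc j (J-1), (θ j - θ (j-1))
          + ∑ l ∈ Icc j (J-1), (ε l j ω - ε l (j-1) ω) := by
      rw [← Finset.sum_add_distrib]
      refine Finset.sum_congr rfl fun l hl => ?_
      rw [mem_Icc] at hl
      rw [hY, hY, if_neg (by omega), if_neg (by omega)]
      ring
    rw [e1, e2, e3, e4, hY, hY, if_pos (show j - 1 < j by omega),
      if_neg (show ¬ j - 1 < j - 1 by omega)]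
    ring
  -- representation of the estimators
  obtain ⟨C1, H1⟩ : ∃ C : ℝ, ∀ ω, βNPWP ω = C + ∑ x ∈ D, Sum.elim aα aE x * G x ω := by
    refine ⟨∑ j ∈ Icc 2 (J-1), v j *
      (((j:ℝ)-1)⁻¹ * ∑ i ∈ Icc 1 (j-1), (μc + θ j + (if i < j then β else 0))
        - ((J:ℝ)-(j:ℝ))⁻¹ * ∑ i ∈ Icc j (J-1), (μc + θ j + (if i < j then β else 0))),
      fun ω => ?_⟩
    rw [hNPWP, hsumD aα aE ω]
    have step1 : ∑ j ∈ Icc 2 (J-1), v j * A j ω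
        = ∑ j ∈ Icc 2 (J-1), v j *
            (((j:ℝ)-1)⁻¹ * ∑ i ∈ Icc 1 (j-1), (μc + θ j + (if i < j then β else 0))
              - ((J:ℝ)-(j:ℝ))⁻¹ * ∑ i ∈ Icc j (J-1), (μc + θ j + (if i < j then β else 0)))
          + (∑ j ∈ Icc 2 (J-1), ∑ i ∈ Icc 1 (J-1), v j * ccf J j i * α i ω
            + ∑ j ∈ Icc 2 (J-1), ∑ i ∈ Icc 1 (J-1), v j * ccf J j i * ε i j ω) := by
      rw [← Finset.sum_add_distrib, ← Finset.sum_add_distrib]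
      refine Finset.sum_congr rfl fun j hj => ?_
      rw [hArep j hj ω, mul_add]
      congr 1
      rw [Finset.mul_sum, ← Finset.sum_add_distrib]
      refine Finset.sum_congr rfl fun i _ => ?_
      ring
    have step2 : ∑ j ∈ Icc 2 (J-1), ∑ i ∈ Icc 1 (J-1), v j * ccf J j i * α i ω
        = ∑ i ∈ Icc 1 (J-1), aα i * α i ω := by
      rw [Finset.sum_comm]
      refine Finset.sum_congr rfl fun i _ => ?_
      rw [haα]
      rw [← Finset.sum_mul]
    have step3 : ∑ j ∈ Icc 2 (J-1), ∑ i ∈ Icc 1 (J-1), v j * ccf J j i * ε i j ω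
        = ∑ z ∈ (Icc 1 (J-1)) ×ˢ (Icc 1 J), aE z * ε z.1 z.2 ω := by
      rw [Finset.sum_product, Finset.sum_comm]
      refine Finset.sum_congr rfl fun i _ => ?_
      rw [← Finset.sum_subset hKsub (fun j _ hjK => by
        simp only [haE]
        rw [if_neg hjK, zero_mul])]
      refine Finset.sum_congr rfl fun j hj => ?_
      simp only [haE]
      rw [if_pos hj]
    rw [step1, step2, step3]
  obtain ⟨C2, H2⟩ : ∃ C : ℝ, ∀ ω,
      βCO ω = C + ∑ x ∈ D, Sum.elim (fun _ => (0:ℝ)) bE x * G x ω := by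
    refine ⟨∑ j ∈ Icc 2 (J-1), w j *
      ((θ j - θ (j-1) + β) - ((J:ℝ)-(j:ℝ))⁻¹ * ∑ l ∈ Icc j (J-1), (θ j - θ (j-1))),
      fun ω => ?_⟩
    rw [hCO, hsumD (fun _ => (0:ℝ)) bE ω]
    rw [Finset.sum_eq_zero (s := Icc 1 (J-1)) (fun i _ => by rw [zero_mul]), zero_add]
    have step1 : ∑ j ∈ Icc 2 (J-1), w j * B j ω
        = ∑ j ∈ Icc 2 (J-1), w j *
            ((θ j - θ (j-1) + β) - ((J:ℝ)-(j:ℝ))⁻¹ * ∑ l ∈ Icc j (J-1), (θ j - θ (j-1)))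
          + (∑ j ∈ Icc 2 (J-1), ∑ i ∈ Icc 1 (J-1), w j * eef J j i * ε i j ω
            - ∑ j ∈ Icc 2 (J-1), ∑ i ∈ Icc 1 (J-1), w j * eef J j i * ε i (j-1) ω) := by
      rw [← Finset.sum_sub_distrib, ← Finset.sum_add_distrib]
      refine Finset.sum_congr rfl fun j hj => ?_
      rw [hBrep j hj ω, mul_add]
      congr 1
      rw [Finset.mul_sum, ← Finset.sum_sub_distrib]
      refine Finset.sum_congr rfl fun i _ => ?_
      ring
    have step2 : ∑ j ∈ Icc 2 (J-1), ∑ i ∈ Icc 1 (J-1), w j * eef J j i * ε i j ω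
        = ∑ i ∈ Icc 1 (J-1), ∑ j ∈ Icc 1 J,
            (if j ∈ Icc 2 (J-1) then w j * eef J j i else 0) * ε i j ω := by
      rw [Finset.sum_comm]
      refine Finset.sum_congr rfl fun i _ => ?_
      rw [← Finset.sum_subset hKsub (fun j _ hjK => by rw [if_neg hjK, zero_mul])]
      refine Finset.sum_congr rfl fun j hj => ?_
      rw [if_pos hj]
    have hmap : Icc 2 (J-1) = (Icc 1 (J-2)).map
        ⟨fun m => m + 1, fun a b h => by simpa using h⟩ := by
      ext x
      simp only [Finset.mem_map, Function.Embedding.coeFn_mk, mem_Icc]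
      constructor
      · intro hx
        exact ⟨x - 1, by omega, by show x - 1 + 1 = x; omega⟩
      · rintro ⟨a, ha, rfl⟩
        show 2 ≤ a + 1 ∧ a + 1 ≤ J - 1
        omega
    have step3 : ∑ j ∈ Icc 2 (J-1), ∑ i ∈ Icc 1 (J-1), w j * eef J j i * ε i (j-1) ω
        = ∑ i ∈ Icc 1 (J-1), ∑ m ∈ Icc 1 J,
            (if m + 1 ∈ Icc 2 (J-1) then w (m+1) * eef J (m+1) i else 0) * ε i m ω := by
      rw [Finset.sum_comm]
      refine Finset.sum_congr rfl fun i _ => ?_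
      have reindex : ∀ g : ℕ → ℝ,
          ∑ j ∈ Icc 2 (J-1), g j = ∑ m ∈ Icc 1 (J-2), g (m+1) := by
        intro g
        rw [hmap, Finset.sum_map]
        rfl
      have lhs_eq : ∑ j ∈ Icc 2 (J-1), w j * eef J j i * ε i (j-1) ω
          = ∑ m ∈ Icc 1 (J-2),
              (if m + 1 ∈ Icc 2 (J-1) then w (m+1) * eef J (m+1) i else 0) * ε i m ω := by
        rw [reindex (fun j => w j * eef J j i * ε i (j-1) ω)]
        refine Finset.sum_congr rfl fun m hm => ?_
        rw [mem_Icc] at hm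
        simp only [Nat.add_sub_cancel]
        rw [if_pos (mem_Icc.mpr (by omega))]
      rw [lhs_eq]
      refine Finset.sum_subset (Finset.Icc_subset_Icc le_rfl (by omega)) ?_
      intro m hmT hm
      rw [mem_Icc] at hmT
      have : ¬ (m + 1 ∈ Icc 2 (J-1)) := by
        rw [mem_Icc]
        rw [mem_Icc] at hm
        omega
      rw [if_neg this, zero_mul]
    have step4 : ∑ i ∈ Icc 1 (J-1), ∑ j ∈ Icc 1 J,
            (if j ∈ Icc 2 (J-1) then w j * eef J j i else 0) * ε i j ω
          - ∑ i ∈ Icc 1 (J-1), ∑ j ∈ Icc 1 J,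
            (if j + 1 ∈ Icc 2 (J-1) then w (j+1) * eef J (j+1) i else 0) * ε i j ω
        = ∑ z ∈ (Icc 1 (J-1)) ×ˢ (Icc 1 J), bE z * ε z.1 z.2 ω := by
      rw [Finset.sum_product, ← Finset.sum_sub_distrib]
      refine Finset.sum_congr rfl fun i _ => ?_
      rw [← Finset.sum_sub_distrib]
      refine Finset.sum_congr rfl fun j hj => ?_
      simp only [hbE]
      ring
    rw [step1, step2, step3, step4]
  -- integrability and means
  have hIntTerm : ∀ (t : (ℕ ⊕ ℕ × ℕ) → ℝ), ∀ x ∈ D,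
      Integrable (fun ω => t x * G x ω) ℙ := fun t x hx =>
    ((hL2G x hx).integrable one_le_two).const_mul (t x)
  have hIntL : ∀ t : (ℕ ⊕ ℕ × ℕ) → ℝ, Integrable (fun ω => ∑ x ∈ D, t x * G x ω) ℙ :=
    fun t => integrable_finset_sum D (hIntTerm t)
  have hEL : ∀ t : (ℕ ⊕ ℕ × ℕ) → ℝ, (∫ ω, ∑ x ∈ D, t x * G x ω) = 0 := by
    intro t
    rw [integral_finset_sum D (hIntTerm t)]
    refine Finset.sum_eq_zero fun x hx => ?_
    rw [integral_const_mul, hmeanG x hx, mul_zero]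
  have hEβN : (∫ ω, βNPWP ω) = C1 := by
    have h : (∫ ω, βNPWP ω) = ∫ ω, (C1 + ∑ x ∈ D, Sum.elim aα aE x * G x ω) :=
      integral_congr_ae (Filter.Eventually.of_forall H1)
    rw [h, integral_add (integrable_const C1) (hIntL _), integral_const, hEL]
    simp
  have hEβC : (∫ ω, βCO ω) = C2 := by
    have h : (∫ ω, βCO ω) = ∫ ω, (C2 + ∑ x ∈ D, Sum.elim (fun _ => (0:ℝ)) bE x * G x ω) :=
      integral_congr_ae (Filter.Eventually.of_forall H2)
    rw [h, integral_add (integrable_const C2) (hIntL _), integral_const, hEL]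
    simp
  have hcov : covar βNPWP βCO
      = ∑ x ∈ D, Sum.elim aα aE x * Sum.elim (fun _ => (0:ℝ)) bE x * ∫ ω, (G x ω)^2 := by
    have h0 : covar βNPWP βCO
        = ∫ ω, (∑ x ∈ D, Sum.elim aα aE x * G x ω)
            * (∑ x ∈ D, Sum.elim (fun _ => (0:ℝ)) bE x * G x ω) := by
      unfold covar
      rw [hEβN, hEβC]
      refine integral_congr_ae (Filter.Eventually.of_forall fun ω => ?_)
      show (βNPWP ω - C1) * (βCO ω - C2)
        = (∑ x ∈ D, Sum.elim aα aE x * G x ω)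
            * (∑ x ∈ D, Sum.elim (fun _ => (0:ℝ)) bE x * G x ω)
      rw [H1 ω, H2 ω]
      ring
    rw [h0, my_key_integral D G hL2G hindepG hmeanG]
  have hmemβ : MemLp βNPWP 2 ℙ := by
    have hm : MemLp (fun ω => C1 + ∑ x ∈ D, Sum.elim aα aE x * G x ω) 2 ℙ :=
      (memLp_const C1).add (memLp_finset_sum D fun x hx => (hL2G x hx).const_mul _)
    exact hm.ae_eq (Filter.Eventually.of_forall fun ω => (H1 ω).symm)
  have hvarβ : variance βNPWP ℙ
      = ∑ x ∈ D, Sum.elim aα aE x * Sum.elim aα aE x * ∫ ω, (G x ω)^2 := by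
    rw [variance_eq_integral hmemβ.aemeasurable]
    refine Eq.trans (integral_congr_ae (Filter.Eventually.of_forall fun ω => ?_))
      (my_key_integral D G hL2G hindepG hmeanG (Sum.elim aα aE) (Sum.elim aα aE))
    simp only [Pi.pow_apply, Pi.sub_apply]
    rw [hEβN, H1 ω]
    ring
  have hcov2 : covar βNPWP βCO
      = ∑ z ∈ (Icc 1 (J-1)) ×ˢ (Icc 1 J), aE z * bE z * σ2 := by
    have hc : ∀ x ∈ D,
        Sum.elim aα aE x * Sum.elim (fun _ => (0:ℝ)) bE x * ∫ ω, (G x ω)^2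
          = Sum.elim aα aE x * Sum.elim (fun _ => (0:ℝ)) bE x
              * Sum.elim (fun _ => τsq) (fun _ => σ2) x := fun x hx => by rw [hvarG x hx]
    rw [hcov, Finset.sum_congr rfl hc, hDsum2]
    simp only [Sum.elim_inl, Sum.elim_inr]
    rw [Finset.sum_eq_zero (fun i (_ : i ∈ Icc 1 (J-1)) => by rw [mul_zero, zero_mul]),
      zero_add]
  have hvar2 : variance βNPWP ℙ
      = ∑ i ∈ Icc 1 (J-1), aα i * aα i * τsq
        + ∑ z ∈ (Icc 1 (J-1)) ×ˢ (Icc 1 J), aE z * aE z * σ2 := by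
    have hc : ∀ x ∈ D,
        Sum.elim aα aE x * Sum.elim aα aE x * ∫ ω, (G x ω)^2
          = Sum.elim aα aE x * Sum.elim aα aE x
              * Sum.elim (fun _ => τsq) (fun _ => σ2) x := fun x hx => by rw [hvarG x hx]
    rw [hvarβ, Finset.sum_congr rfl hc, hDsum2]
    simp only [Sum.elim_inl, Sum.elim_inr]
  -- evaluate the covariance sum
  have hcovsum : ∑ z ∈ (Icc 1 (J-1)) ×ˢ (Icc 1 J), aE z * bE z * σ2
      = ∑ j ∈ Icc 2 (J-1), σ2 * (v j * w j * (((j:ℝ)-1)⁻¹ + ((J:ℝ)-(j:ℝ))⁻¹)) := by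
    rw [Finset.sum_product, Finset.sum_comm]
    rw [← Finset.sum_subset hKsub (fun j _ hjK => Finset.sum_eq_zero fun i _ => by
      simp only [haE]
-- noop
      rw [if_neg hjK, zero_mul, zero_mul])]
    refine Finset.sum_congr rfl fun j hjm => ?_
    have hj := mem_Icc.mp hjm
    by_cases hc : j + 1 ∈ Icc 2 (J-1)
    · have he : ∀ i ∈ Icc 1 (J-1), aE (i,j) * bE (i,j) * σ2
          = σ2 * (v j * w j) * (ccf J j i * eef J j i)
            - σ2 * (v j * w (j+1)) * (ccf J j i * eef J (j+1) i) := by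
        intro i _
        simp only [haE, hbE]
-- noop
        rw [if_pos hjm, if_pos hjm, if_pos hc]
        ring
      rw [Finset.sum_congr rfl he, Finset.sum_sub_distrib, ← Finset.mul_sum, ← Finset.mul_sum,
        sum_cc_ee hJ hj.1 hj.2, sum_cc_ee' hJ hj.1 (mem_Icc.mp hc).2]
      ring
    · have he : ∀ i ∈ Icc 1 (J-1), aE (i,j) * bE (i,j) * σ2
          = σ2 * (v j * w j) * (ccf J j i * eef J j i) := by
        intro i _
        simp only [haE, hbE]
-- noop
        rw [if_pos hjm, if_pos hjm, if_neg hc]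
        ring
      rw [Finset.sum_congr rfl he, ← Finset.mul_sum, sum_cc_ee hJ hj.1 hj.2]
      ring
  -- evaluate the variance ε-part sum
  have hvarsum : ∑ z ∈ (Icc 1 (J-1)) ×ˢ (Icc 1 J), aE z * aE z * σ2
      = ∑ j ∈ Icc 2 (J-1), σ2 * (v j * v j * (((j:ℝ)-1)⁻¹ + ((J:ℝ)-(j:ℝ))⁻¹)) := by
    rw [Finset.sum_product, Finset.sum_comm]
    rw [← Finset.sum_subset hKsub (fun j _ hjK => Finset.sum_eq_zero fun i _ => by
      simp only [haE]
-- noop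
      rw [if_neg hjK, zero_mul, zero_mul])]
    refine Finset.sum_congr rfl fun j hjm => ?_
    have hj := mem_Icc.mp hjm
    have he : ∀ i ∈ Icc 1 (J-1), aE (i,j) * aE (i,j) * σ2
        = σ2 * (v j * v j) * (ccf J j i * ccf J j i) := by
      intro i _
      simp only [haE]
-- noop
      rw [if_pos hjm]
      ring
    rw [Finset.sum_congr rfl he, ← Finset.mul_sum, sum_cc_sq hJ hj.1 hj.2]
    ring
  -- expand the variance α-part sum
  have haαexp : ∑ i ∈ Icc 1 (J-1), aα i * aα i * τsq
      = τsq * ∑ j ∈ Icc 2 (J-1), ∑ k ∈ Icc 2 (J-1),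
          (v j * v k) * ∑ i ∈ Icc 1 (J-1), ccf J j i * ccf J k i := by
    have e2 : ∑ i ∈ Icc 1 (J-1), aα i * aα i * τsq
        = τsq * ∑ i ∈ Icc 1 (J-1), ∑ j ∈ Icc 2 (J-1), ∑ k ∈ Icc 2 (J-1),
            (v j * v k) * (ccf J j i * ccf J k i) := by
      rw [Finset.mul_sum]
      refine Finset.sum_congr rfl fun i _ => ?_
      simp only [haα]
      rw [Finset.sum_mul_sum]
      rw [show ∑ j ∈ Icc 2 (J-1), ∑ k ∈ Icc 2 (J-1), (v j * ccf J j i) * (v k * ccf J k i)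
          = ∑ j ∈ Icc 2 (J-1), ∑ k ∈ Icc 2 (J-1), (v j * v k) * (ccf J j i * ccf J k i) from
        Finset.sum_congr rfl fun j _ => Finset.sum_congr rfl fun k _ => by ring]
      ring
    rw [e2]
    congr 1
    rw [Finset.sum_comm]
    refine Finset.sum_congr rfl fun j _ => ?_
    rw [Finset.sum_comm]
    refine Finset.sum_congr rfl fun k _ => ?_
    rw [← Finset.mul_sum]
  -- positivity facts
  have hτ : 0 ≤ τsq := by
    have h := hVα 1 (mem_Icc.mpr ⟨le_rfl, by omega⟩)
    rw [← h]
    exact variance_nonneg _ _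
  have hρnn : ∀ j ∈ Icc 2 (J-1), ∀ k ∈ Icc 2 (J-1),
      0 ≤ ∑ i ∈ Icc 1 (J-1), ccf J j i * ccf J k i := by
    intro j hj k hk
    rw [mem_Icc] at hj hk
    rcases le_total j k with h | h
    · rw [sum_cc_cc hJ hj.1 h hk.2]
      obtain ⟨c1, c2, c3, c4⟩ := cast_facts hJ hj.1 h hk.2
      have hJ1 : (0:ℝ) < (J:ℝ) - 1 := by linarith
      positivity
    · have hcomm : ∑ i ∈ Icc 1 (J-1), ccf J j i * ccf J k i
          = ∑ i ∈ Icc 1 (J-1), ccf J k i * ccf J j i :=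
        Finset.sum_congr rfl fun i _ => mul_comm _ _
      rw [hcomm, sum_cc_cc hJ hk.1 h hj.2]
      obtain ⟨c1, c2, c3, c4⟩ := cast_facts hJ hk.1 h hj.2
      have hJ1 : (0:ℝ) < (J:ℝ) - 1 := by linarith
      positivity
  have hdiag : ∑ j ∈ Icc 2 (J-1), (v j * v j) * (((j:ℝ)-1)⁻¹ + ((J:ℝ)-(j:ℝ))⁻¹)
      ≤ ∑ j ∈ Icc 2 (J-1), ∑ k ∈ Icc 2 (J-1),
          (v j * v k) * ∑ i ∈ Icc 1 (J-1), ccf J j i * ccf J k i := by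
    refine Finset.sum_le_sum fun j hj => ?_
    have hjj := mem_Icc.mp hj
    have h1 : (v j * v j) * (((j:ℝ)-1)⁻¹ + ((J:ℝ)-(j:ℝ))⁻¹)
        = (v j * v j) * ∑ i ∈ Icc 1 (J-1), ccf J j i * ccf J j i := by
      rw [sum_cc_sq hJ hjj.1 hjj.2]
    rw [h1]
    exact Finset.single_le_sum
      (f := fun k => (v j * v k) * ∑ i ∈ Icc 1 (J-1), ccf J j i * ccf J k i)
      (fun k hk => mul_nonneg (mul_nonneg (hv0 j hj) (hv0 k hk)) (hρnn j hj k hk)) hj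
  have hvpos : ∀ j ∈ Icc 2 (J-1), 0 < v j := by
    intro j hj
    have h1 := hvw j hj
    have h2 := hw0 j hj
    nlinarith [hσ2pos, hτ, hv0 j hj]
  have hddpos : ∀ j ∈ Icc 2 (J-1), 0 < ((j:ℝ)-1)⁻¹ + ((J:ℝ)-(j:ℝ))⁻¹ := by
    intro j hj
    rw [mem_Icc] at hj
    obtain ⟨c1, c2, c3, c4⟩ := cast_facts hJ hj.1 le_rfl hj.2
    positivity
  have hKne : (Icc 2 (J-1)).Nonempty := ⟨2, mem_Icc.mpr ⟨le_rfl, by omega⟩⟩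
  have hlt : ∑ j ∈ Icc 2 (J-1), σ2 * (v j * w j * (((j:ℝ)-1)⁻¹ + ((J:ℝ)-(j:ℝ))⁻¹))
      < ∑ j ∈ Icc 2 (J-1), (τsq + σ2) * (v j * v j * (((j:ℝ)-1)⁻¹ + ((J:ℝ)-(j:ℝ))⁻¹)) := by
    refine Finset.sum_lt_sum_of_nonempty hKne fun j hj => ?_
    have h1 := hvw j hj
    have h2 := hvpos j hj
    have h3 := hddpos j hj
    have key := mul_lt_mul_of_pos_right h1 (mul_pos h2 h3)
    nlinarith [key]
  rw [hcov2, hcovsum, hvar2, hvarsum, haαexp]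
  refine lt_of_lt_of_le hlt ?_
  have hsplit : ∑ j ∈ Icc 2 (J-1), (τsq + σ2) * (v j * v j * (((j:ℝ)-1)⁻¹ + ((J:ℝ)-(j:ℝ))⁻¹))
      = τsq * ∑ j ∈ Icc 2 (J-1), (v j * v j) * (((j:ℝ)-1)⁻¹ + ((J:ℝ)-(j:ℝ))⁻¹)
        + ∑ j ∈ Icc 2 (J-1), σ2 * (v j * v j * (((j:ℝ)-1)⁻¹ + ((J:ℝ)-(j:ℝ))⁻¹)) := by
    rw [Finset.mul_sum, ← Finset.sum_add_distrib]
    refine Finset.sum_congr rfl fun j _ => by ring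
  rw [hsplit]
  have hmul := mul_le_mul_of_nonneg_left hdiag hτ
  linarith
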